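/- arXiv:0806.1255 — 5 statements merged into one kernel-verified Lean document; each statement's English description precedes it below -/
import Mathlib

section
/- Let n ≥ 1 and k ≥ 0. Suppose given, for each subset S ⊆ {0,…,n}, a finite-dimensional real vector space X(S), linear maps tr_{S,S'} : X(S) → X(S') for all S' ⊆ S, and linear maps E_{S',S} : X(S') → X(S) for all S' ⊆ S, satisfying: (i) tr_{S,S} = id; (ii) tr_{S',S''} ∘ tr_{S,S'} = tr_{S,S''} whenever S'' ⊆ S' ⊆ S; (iii) each tr_{S,S'} is surjective; (iv) X(S) = 0 whenever |S| ≤ k; (v) tr_{S,S'} ∘ E_{S',S} = id on X(S') whenever S' ⊆ S; (vi) (consistency) tr_{H,G} ∘ E_{F,H} = E_{F∩G,G} ∘ tr_{F,F∩G} whenever F, G ⊆ H ⊆ {0,…,n}. For S ⊆ {0,…,n} let X̊(S) := {ω ∈ X(S) : tr_{S,S'} ω = 0 for every proper subset S' ⊊ S}. Then, with N := {0,…,n}, X(N) is the internal direct sum X(N) = ⊕_{S ⊆ N} E_{S,N}(X̊(S)). -/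
noncomputable section

/-- The subspace `X̊(S)` of elements of `X(S)` whose traces on all proper subfaces vanish. -/
def zeroTraceSub {n : ℕ} (X : Finset (Fin (n + 1)) → Type)
    [∀ S, AddCommGroup (X S)] [∀ S, Module ℝ (X S)]
    (tr : ∀ S S' : Finset (Fin (n + 1)), S' ⊆ S → (X S →ₗ[ℝ] X S'))
    (S : Finset (Fin (n + 1))) : Submodule ℝ (X S) where
  carrier := {ω | ∀ (S' : Finset (Fin (n + 1))) (h : S' ⊆ S), S' ≠ S → tr S S' h ω = 0}
  add_mem' := by
    intro a b ha hb S' h hne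
    rw [map_add, ha S' h hne, hb S' h hne, add_zero]
  zero_mem' := by intro S' h hne; exact map_zero _
  smul_mem' := by
    intro c a ha S' h hne
    rw [map_smul, ha S' h hne, smul_zero]

/-!
Every `ω ∈ X(N)` has geometric components `η S ∈ X(S)`, built by recursion over the faces:
`η S := tr_{N,S} ω - ∑_{T ⊊ S} E_{T,S} (η T)`, so that `tr_{N,S} ω = ∑_{T ⊆ S} E_{T,S} (η T)`
and in particular `ω = ∑_S E_{S,N} (η S)`. The consistency condition says that tracing the
extension of `ξ ∈ X(F)` onto `G` only sees `tr_{F,F∩G} ξ`: it vanishes for zero-trace `ξ` unless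
`F ⊆ G`, and equals `E_{F,G} ξ` when `F ⊆ G`. Together these show, by induction over the faces,
that each `η S` is zero-trace; the first one alone shows, tracing a vanishing sum
`∑_S E_{S,N} ξ_S` with zero-trace `ξ_S` onto the faces in increasing order, that all `ξ_S` vanish.
-/

open Finset

section ConsistentExtension

variable {α R : Type*} [DecidableEq α] [Ring R] {X : Finset α → Type*}
  [∀ S, AddCommGroup (X S)] [∀ S, Module R (X S)]
  (tr : ∀ S S' : Finset α, S' ⊆ S → (X S →ₗ[R] X S'))
  (E : ∀ S' S : Finset α, S' ⊆ S → (X S' →ₗ[R] X S))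
  (h_tr_refl : ∀ S, tr S S (subset_refl S) = LinearMap.id)
  (h_tr_comp : ∀ (S S' S'' : Finset α) (h1 : S' ⊆ S) (h2 : S'' ⊆ S'),
    (tr S' S'' h2).comp (tr S S' h1) = tr S S'' (h2.trans h1))
  (h_E_tr : ∀ (S' S : Finset α) (h : S' ⊆ S), (tr S S' h).comp (E S' S h) = LinearMap.id)
  (h_consist : ∀ (F G H : Finset α) (hF : F ⊆ H) (hG : G ⊆ H),
    (tr H G hG).comp (E F H hF) =
      (E (F ∩ G) G inter_subset_right).comp (tr F (F ∩ G) inter_subset_left))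

include h_consist in
theorem tr_ext_eq_zero_of_tr_inter_eq_zero {F G H : Finset α} (hF : F ⊆ H) (hG : G ⊆ H)
    {ξ : X F} (hξ : tr F (F ∩ G) inter_subset_left ξ = 0) : tr H G hG (E F H hF ξ) = 0 := by
  rw [← LinearMap.comp_apply, h_consist F G H hF hG, LinearMap.comp_apply, hξ, map_zero]

include h_tr_refl h_consist in
theorem tr_ext_of_subset {F G H : Finset α} (hFG : F ⊆ G) (hG : G ⊆ H) (ξ : X F) :
    tr H G hG (E F H (hFG.trans hG) ξ) = E F G hFG ξ := by
  have consist_of_eq : ∀ I (hI : F ∩ G = I), tr H G hG (E F H (hFG.trans hG) ξ) =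
      E I G (hI ▸ inter_subset_right) (tr F I (hI ▸ inter_subset_left) ξ) := by
    rintro _ rfl
    exact LinearMap.congr_fun (h_consist F G H _ hG) ξ
  rw [consist_of_eq F (inter_eq_left.mpr hFG), h_tr_refl]
  rfl

omit [DecidableEq α] in
include h_tr_refl h_E_tr in
theorem ext_self (S : Finset α) : E S S (subset_refl S) = LinearMap.id := by
  simpa only [h_tr_refl, LinearMap.id_comp] using h_E_tr S S (subset_refl S)

/-- Extension by zero to pairs `T ⊄ S`, so that extensions can be summed over families of faces
without carrying inclusion proofs. -/
def extOrZero (T S : Finset α) : X T →ₗ[R] X S :=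
  if h : T ⊆ S then E T S h else 0

theorem extOrZero_of_subset {T S : Finset α} (h : T ⊆ S) : extOrZero E T S = E T S h :=
  dif_pos h

variable [Fintype α]

def geomComponent (ω : X univ) (S : Finset α) : X S :=
  tr univ S (subset_univ S) ω - ∑ T ∈ S.ssubsets.attach, extOrZero E T S (geomComponent ω T)
termination_by S.card
decreasing_by exact card_lt_card (mem_ssubsets.mp T.2)

theorem geomComponent_eq (ω : X univ) (S : Finset α) :
    geomComponent tr E ω S = tr univ S (subset_univ S) ω -
      ∑ T ∈ S.ssubsets, extOrZero E T S (geomComponent tr E ω T) := by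
  rw [geomComponent, sum_attach S.ssubsets fun T => extOrZero E T S (geomComponent tr E ω T)]

include h_tr_refl h_E_tr in
theorem tr_univ_eq_sum_geomComponent (ω : X univ) (S : Finset α) :
    tr univ S (subset_univ S) ω =
      ∑ T ∈ S.powerset, extOrZero E T S (geomComponent tr E ω T) := by
  rw [← add_sum_erase _ _ (mem_powerset_self S), extOrZero_of_subset E (subset_refl S),
    ext_self tr E h_tr_refl h_E_tr, ← ssubsets, LinearMap.id_apply, geomComponent_eq]
  abel

include h_tr_refl h_E_tr in
theorem sum_ext_geomComponent (ω : X univ) :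
    ∑ S, E S univ (subset_univ S) (geomComponent tr E ω S) = ω := by
  have h := tr_univ_eq_sum_geomComponent tr E h_tr_refl h_E_tr ω univ
  rw [h_tr_refl, LinearMap.id_apply, powerset_univ] at h
  refine (sum_congr rfl fun S _ => ?_).trans h.symm
  rw [extOrZero_of_subset E (subset_univ S)]

include h_tr_refl h_tr_comp h_E_tr h_consist in
theorem geomComponent_tr_eq_zero (ω : X univ) (S : Finset α) :
    ∀ S' (h : S' ⊆ S), S' ≠ S → tr S S' h (geomComponent tr E ω S) = 0 := by
  induction S using strongInduction with
  | _ S ih =>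
  intro S' hS' hne
  have hss : S' ⊂ S := ssubset_of_subset_of_ne hS' hne
  have sub : S'.powerset ⊆ S.ssubsets := fun T hT =>
    mem_ssubsets.mpr ((mem_powerset.mp hT).trans_ssubset hss)
  have tr_of_subset : ∀ T ∈ S'.powerset, tr S S' hS' (extOrZero E T S (geomComponent tr E ω T)) =
      extOrZero E T S' (geomComponent tr E ω T) := fun T hT => by
    have hT := mem_powerset.mp hT
    rw [extOrZero_of_subset E (hT.trans hS'), extOrZero_of_subset E hT,
      tr_ext_of_subset tr E h_tr_refl h_consist]
  have tr_of_not_subset : ∀ T ∈ S.ssubsets, T ∉ S'.powerset →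
      tr S S' hS' (extOrZero E T S (geomComponent tr E ω T)) = 0 := fun T hT hT' => by
    have hTS := mem_ssubsets.mp hT
    have hTS' : ¬ T ⊆ S' := fun h => hT' (mem_powerset.mpr h)
    rw [extOrZero_of_subset E hTS.subset]
    exact tr_ext_eq_zero_of_tr_inter_eq_zero tr E h_consist _ _ <|
      ih T hTS _ _ fun h => hTS' (h ▸ inter_subset_right)
  rw [geomComponent_eq, map_sub, map_sum, ← LinearMap.comp_apply, h_tr_comp,
    ← sum_subset sub tr_of_not_subset, sum_congr rfl tr_of_subset,
    ← tr_univ_eq_sum_geomComponent tr E h_tr_refl h_E_tr, sub_self]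

include h_E_tr h_consist in
theorem eq_zero_of_sum_ext_eq_zero (s : Finset (Finset α)) (v : Finset α → X univ)
    (hv : ∀ S ∈ s, ∃ ξ : X S, (∀ S' (h : S' ⊆ S), S' ≠ S → tr S S' h ξ = 0) ∧
      E S univ (subset_univ S) ξ = v S)
    (hsum : ∑ S ∈ s, v S = 0) : ∀ T ∈ s, v T = 0 := by
  intro T
  induction T using strongInduction with
  | _ T ih =>
  intro hT
  obtain ⟨ξ, -, hξv⟩ := hv T hT
  have tr_other : ∀ S ∈ s, S ≠ T → tr univ T (subset_univ T) (v S) = 0 := fun S hS hne => by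
    by_cases hST : S ⊆ T
    · rw [ih S (ssubset_of_subset_of_ne hST hne) hS, map_zero]
    · obtain ⟨ζ, hζ, hζv⟩ := hv S hS
      rw [← hζv]
      exact tr_ext_eq_zero_of_tr_inter_eq_zero tr E h_consist _ _ <|
        hζ _ _ fun h => hST (h ▸ inter_subset_right)
  have hξ : ξ = 0 := by
    have h := congrArg (tr univ T (subset_univ T)) hsum
    rwa [map_sum, map_zero, sum_eq_single_of_mem T hT tr_other, ← hξv, ← LinearMap.comp_apply,
      h_E_tr, LinearMap.id_apply] at h
  rw [← hξv, hξ, map_zero]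

end ConsistentExtension

theorem stmt1_general (n : ℕ)
    (X : Finset (Fin (n + 1)) → Type)
    [∀ S, AddCommGroup (X S)] [∀ S, Module ℝ (X S)]
    (tr : ∀ S S' : Finset (Fin (n + 1)), S' ⊆ S → (X S →ₗ[ℝ] X S'))
    (E : ∀ S' S : Finset (Fin (n + 1)), S' ⊆ S → (X S' →ₗ[ℝ] X S))
    (h_tr_refl : ∀ S, tr S S (subset_refl S) = LinearMap.id)
    (h_tr_comp : ∀ (S S' S'' : Finset (Fin (n + 1))) (h1 : S' ⊆ S) (h2 : S'' ⊆ S'),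
      (tr S' S'' h2).comp (tr S S' h1) = tr S S'' (h2.trans h1))
    (h_E_tr : ∀ (S' S : Finset (Fin (n + 1))) (h : S' ⊆ S),
      (tr S S' h).comp (E S' S h) = LinearMap.id)
    (h_consist : ∀ (F G H : Finset (Fin (n + 1))) (hF : F ⊆ H) (hG : G ⊆ H),
      (tr H G hG).comp (E F H hF) =
        (E (F ∩ G) G Finset.inter_subset_right).comp
          (tr F (F ∩ G) Finset.inter_subset_left)) :
    DirectSum.IsInternal fun S : Finset (Fin (n + 1)) =>
      Submodule.map (E S Finset.univ (Finset.subset_univ S)) (zeroTraceSub X tr S) := by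
  refine DirectSum.isInternal_submodule_of_iSupIndep_of_iSup_eq_top ?_ ?_
  · rw [iSupIndep_iff_finsetSum_eq_zero_imp_eq_zero]
    intro s v hv hsum
    exact eq_zero_of_sum_ext_eq_zero tr E h_E_tr h_consist s v
      (fun S hS => Submodule.mem_map.mp (hv S hS)) hsum
  · refine eq_top_iff.mpr fun ω _ => ?_
    rw [← sum_ext_geomComponent tr E h_tr_refl h_E_tr ω]
    exact Submodule.sum_mem_iSup fun S => Submodule.mem_map_of_mem
      (geomComponent_tr_eq_zero tr E h_tr_refl h_tr_comp h_E_tr h_consist ω S)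

/-- given a consistent family of extension operators on the face lattice of an
`n`-simplex, the space `X(N)` associated to the whole simplex decomposes as the internal direct
sum over the subsets `S ⊆ {0,…,n}` of the extensions of the zero-trace subspaces `X̊(S)`. -/
theorem stmt1 (n k : ℕ) (hn : 1 ≤ n)
    (X : Finset (Fin (n + 1)) → Type)
    [∀ S, AddCommGroup (X S)] [∀ S, Module ℝ (X S)] [∀ S, FiniteDimensional ℝ (X S)]
    (tr : ∀ S S' : Finset (Fin (n + 1)), S' ⊆ S → (X S →ₗ[ℝ] X S'))
    (E : ∀ S' S : Finset (Fin (n + 1)), S' ⊆ S → (X S' →ₗ[ℝ] X S))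
    (h_tr_refl : ∀ S, tr S S (subset_refl S) = LinearMap.id)
    (h_tr_comp : ∀ (S S' S'' : Finset (Fin (n + 1))) (h1 : S' ⊆ S) (h2 : S'' ⊆ S'),
      (tr S' S'' h2).comp (tr S S' h1) = tr S S'' (h2.trans h1))
    (h_tr_surj : ∀ (S S' : Finset (Fin (n + 1))) (h : S' ⊆ S),
      Function.Surjective (tr S S' h))
    (h_low : ∀ S : Finset (Fin (n + 1)), S.card ≤ k → ∀ ξ : X S, ξ = 0)
    (h_E_tr : ∀ (S' S : Finset (Fin (n + 1))) (h : S' ⊆ S),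
      (tr S S' h).comp (E S' S h) = LinearMap.id)
    (h_consist : ∀ (F G H : Finset (Fin (n + 1))) (hF : F ⊆ H) (hG : G ⊆ H),
      (tr H G hG).comp (E F H hF) =
        (E (F ∩ G) G Finset.inter_subset_right).comp
          (tr F (F ∩ G) Finset.inter_subset_left)) :
    DirectSum.IsInternal fun S : Finset (Fin (n + 1)) =>
      Submodule.map (E S Finset.univ (Finset.subset_univ S)) (zeroTraceSub X tr S) :=
  stmt1_general n X tr E h_tr_refl h_tr_comp h_E_tr h_consist
end
end

section
/- Let r ≥ 1 and 0 ≤ k ≤ n. The set {λ^α dλ_σ : α ∈ ℕ^{n+1}, |α| = r, σ : {1,…,k} → {0,…,n} increasing} spans P_rΛ^k, and the family {λ^α dλ_σ : α ∈ ℕ^{n+1}, |α| = r, σ : {1,…,k} → {1,…,n} increasing} (i.e., those σ with 0 ∉ ⟦σ⟧) is a basis of P_rΛ^k. -/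
open scoped BigOperators

noncomputable section

/-- The wedge product of `k` linear functionals on `ℝⁿ`:
`(wedge f) v = det (matrix whose (j,i) entry is f i (v j))`. -/
def wedge {n k : ℕ} (f : Fin k → ((Fin n → ℝ) →ₗ[ℝ] ℝ)) :
    (Fin n → ℝ) [⋀^Fin k]→ₗ[ℝ] ℝ :=
  (Matrix.detRowAlternating : (Fin k → ℝ) [⋀^Fin k]→ₗ[ℝ] ℝ).compLinearMap
    (LinearMap.pi f)

/-- The wedge product of a linear functional (a `1`-form) with an alternating `k`-form on `ℝⁿ`. -/
def oneWedge {n k : ℕ} (f : (Fin n → ℝ) →ₗ[ℝ] ℝ)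
    (η : (Fin n → ℝ) [⋀^Fin k]→ₗ[ℝ] ℝ) :
    (Fin n → ℝ) [⋀^Fin (k + 1)]→ₗ[ℝ] ℝ :=
  ((TensorProduct.lid ℝ ℝ).toLinearMap.compAlternatingMap
    (AlternatingMap.domCoprod
      ((AlternatingMap.ofSubsingleton ℝ (Fin n → ℝ) ℝ (0 : Fin 1)) f) η)).domDomCongr
    (finSumFinEquiv.trans (finCongr (Nat.add_comm 1 k)))

/-- A nondegenerate simplex in `ℝⁿ` with vertices `x 0, …, x n`, together with its barycentric
coordinate functions `λ_i = dlam i + c i`: the unique affine functions with `λ_i (x j) = δ_{ij}`,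
`dlam i` being the linear part `dλ_i`. -/
structure Simplex (n : ℕ) where
  x : Fin (n + 1) → (Fin n → ℝ)
  affineIndep : AffineIndependent ℝ x
  dlam : Fin (n + 1) → ((Fin n → ℝ) →ₗ[ℝ] ℝ)
  c : Fin (n + 1) → ℝ
  lam_vertex : ∀ i j, dlam i (x j) + c i = if i = j then 1 else 0

namespace Simplex

variable {n : ℕ} (B : Simplex n)

/-- The barycentric coordinate function `λ_i`. -/
def lam (i : Fin (n + 1)) (y : Fin n → ℝ) : ℝ := B.dlam i y + B.c i

/-- The barycentric monomial `λ^α = λ_0^{α_0} ⋯ λ_n^{α_n}`. -/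
def lamPow (α : Fin (n + 1) → ℕ) (y : Fin n → ℝ) : ℝ := ∏ i, (B.lam i y) ^ (α i)

/-- `dλ_σ = dλ_{σ 0} ∧ ⋯ ∧ dλ_{σ (k-1)}`. -/
def dlamWedge {k : ℕ} (σ : Fin k → Fin (n + 1)) : (Fin n → ℝ) [⋀^Fin k]→ₗ[ℝ] ℝ :=
  wedge fun j => B.dlam (σ j)

/-- The Whitney form `φ_σ = Σ_i (-1)^i λ_{σ i} dλ_{σ 0} ∧ ⋯ ∧ (omit dλ_{σ i}) ∧ ⋯ ∧ dλ_{σ k}`. -/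
def whitney {k : ℕ} (σ : Fin (k + 1) → Fin (n + 1)) (y : Fin n → ℝ) :
    (Fin n → ℝ) [⋀^Fin k]→ₗ[ℝ] ℝ :=
  ∑ i : Fin (k + 1), ((-1 : ℝ) ^ (i : ℕ) * B.lam (σ i) y) •
    wedge fun j : Fin k => B.dlam (σ (i.succAbove j))

/-- The tangent space `T_S = ∩_{i ∉ S} ker dλ_i` of the face `f_S`. -/
def tangent (S : Finset (Fin (n + 1))) : Set (Fin n → ℝ) :=
  {v | ∀ i ∉ S, B.dlam i v = 0}

/-- `ψ^{α,S}_i = dλ_i - (α_i / r) Σ_{j ∈ S} dλ_j`. -/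
def psi (α : Fin (n + 1) → ℕ) (r : ℕ) (S : Finset (Fin (n + 1))) (i : Fin (n + 1)) :
    (Fin n → ℝ) →ₗ[ℝ] ℝ :=
  B.dlam i - ((α i : ℝ) / (r : ℝ)) • ∑ j ∈ S, B.dlam j

/-- `ψ^{α,S}_σ = ψ^{α,S}_{σ 1} ∧ ⋯ ∧ ψ^{α,S}_{σ k}`. -/
def psiWedge {k : ℕ} (α : Fin (n + 1) → ℕ) (r : ℕ) (S : Finset (Fin (n + 1)))
    (σ : Fin k → Fin (n + 1)) : (Fin n → ℝ) [⋀^Fin k]→ₗ[ℝ] ℝ :=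
  wedge fun j => B.psi α r S (σ j)

/-- The list of direction vectors `x_j - x_l`, with `x_j - x_l` repeated `α j` times. -/
def dirList (α : Fin (n + 1) → ℕ) (l : Fin (n + 1)) : List (Fin n → ℝ) :=
  (List.finRange (n + 1)).flatMap fun j => List.replicate (α j) (B.x j - B.x l)

end Simplex

/-- The support `⟦α⟧` of a multi-index. -/
def suppF {n : ℕ} (α : Fin (n + 1) → ℕ) : Finset (Fin (n + 1)) :=
  Finset.univ.filter fun i => α i ≠ 0

/-- The range `⟦σ⟧` of an (increasing) map, as a finset. -/
def rangeF {n k : ℕ} (σ : Fin k → Fin (n + 1)) : Finset (Fin (n + 1)) :=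
  Finset.image σ Finset.univ

/-- `f : ℝⁿ → ℝ` is a polynomial function of (total) degree at most `r`. -/
def IsPolyDeg {n : ℕ} (r : ℕ) (f : (Fin n → ℝ) → ℝ) : Prop :=
  ∃ p : MvPolynomial (Fin n) ℝ, p.totalDegree ≤ r ∧ ∀ y, MvPolynomial.eval y p = f y

/-- `P_r`: the space of polynomial functions on `ℝⁿ` of degree at most `r`. -/
def Pscalar (n r : ℕ) : Submodule ℝ ((Fin n → ℝ) → ℝ) where
  carrier := {f | IsPolyDeg r f}
  add_mem' := by
    rintro f g ⟨p, hp, hpe⟩ ⟨q, hq, hqe⟩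
    exact ⟨p + q, le_trans (MvPolynomial.totalDegree_add p q) (max_le hp hq),
      fun y => by simp [hpe y, hqe y]⟩
  zero_mem' := ⟨0, by simp, fun y => by simp⟩
  smul_mem' := by
    rintro a f ⟨p, hp, hpe⟩
    exact ⟨a • p, le_trans (MvPolynomial.totalDegree_smul_le a p) hp,
      fun y => by simp [MvPolynomial.smul_eq_C_mul, hpe y]⟩

/-- `P_r Λ^k`: the space of polynomial differential `k`-forms of degree at most `r` on `ℝⁿ`. -/
def PLambda (n r k : ℕ) :
    Submodule ℝ ((Fin n → ℝ) → ((Fin n → ℝ) [⋀^Fin k]→ₗ[ℝ] ℝ)) where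
  carrier := {ω | ∀ v : Fin k → (Fin n → ℝ), IsPolyDeg r fun y => ω y v}
  add_mem' := by
    intro ω η hω hη v
    exact (Pscalar n r).add_mem (hω v) (hη v)
  zero_mem' := fun v => (Pscalar n r).zero_mem
  smul_mem' := by
    intro a ω hω v
    exact (Pscalar n r).smul_mem a (hω v)

/-- The Koszul operator `κ`, contracting a `(k+1)`-form field with the position vector. -/
def koszulHom (n k : ℕ) :
    ((Fin n → ℝ) → ((Fin n → ℝ) [⋀^Fin (k + 1)]→ₗ[ℝ] ℝ)) →ₗ[ℝ]
      ((Fin n → ℝ) → ((Fin n → ℝ) [⋀^Fin k]→ₗ[ℝ] ℝ)) where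
  toFun ω := fun y => (ω y).curryLeft y
  map_add' ω η := by funext y; simp
  map_smul' a ω := by funext y; simp

/-- `P⁻_r Λ^k = P_{r-1} Λ^k + κ (P_{r-1} Λ^{k+1})`. -/
def PminusLambda (n r k : ℕ) :
    Submodule ℝ ((Fin n → ℝ) → ((Fin n → ℝ) [⋀^Fin k]→ₗ[ℝ] ℝ)) :=
  PLambda n (r - 1) k ⊔ Submodule.map (koszulHom n k) (PLambda n (r - 1) (k + 1))

/-- `ω` has vanishing trace on the face `f_S`. -/
def VanishTrace {n k : ℕ} (B : Simplex n) (S : Finset (Fin (n + 1)))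
    (ω : (Fin n → ℝ) → ((Fin n → ℝ) [⋀^Fin k]→ₗ[ℝ] ℝ)) : Prop :=
  ∀ y : Fin n → ℝ, (∀ i ∉ S, B.lam i y = 0) →
    ∀ v : Fin k → (Fin n → ℝ), (∀ j, v j ∈ B.tangent S) → ω y v = 0

/-- Forms having vanishing trace on every face `f_S` with `|S| = n`
(the codimension-one faces). -/
def traceZeroSub {n : ℕ} (B : Simplex n) (k : ℕ) :
    Submodule ℝ ((Fin n → ℝ) → ((Fin n → ℝ) [⋀^Fin k]→ₗ[ℝ] ℝ)) where
  carrier := {ω | ∀ S : Finset (Fin (n + 1)), S.card = n → VanishTrace B S ω}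
  add_mem' := by
    intro ω η hω hη S hS y hy v hv
    simp only [Pi.add_apply, AlternatingMap.add_apply, hω S hS y hy v hv,
      hη S hS y hy v hv, add_zero]
  zero_mem' := by intro S hS y hy v hv; simp
  smul_mem' := by
    intro a ω hω S hS y hy v hv
    simp only [Pi.smul_apply, AlternatingMap.smul_apply, hω S hS y hy v hv, smul_zero]

/-- `P̊_r Λ^k`: polynomial forms with vanishing trace on the boundary. -/
def PLambdaZero {n : ℕ} (B : Simplex n) (r k : ℕ) :
    Submodule ℝ ((Fin n → ℝ) → ((Fin n → ℝ) [⋀^Fin k]→ₗ[ℝ] ℝ)) :=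
  PLambda n r k ⊓ traceZeroSub B k

/-- `P̊⁻_r Λ^k`: forms in `P⁻_r Λ^k` with vanishing trace on the boundary. -/
def PminusLambdaZero {n : ℕ} (B : Simplex n) (r k : ℕ) :
    Submodule ℝ ((Fin n → ℝ) → ((Fin n → ℝ) [⋀^Fin k]→ₗ[ℝ] ℝ)) :=
  PminusLambda n r k ⊓ traceZeroSub B k

/-- `f` vanishes to order `r` at `y`: all partial derivatives of order `< r` vanish at `y`. -/
def VanishOrder {n : ℕ} (r : ℕ) (f : (Fin n → ℝ) → ℝ) (y : Fin n → ℝ) : Prop :=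
  ∀ m : ℕ, m < r → iteratedFDeriv ℝ m f y = 0

/-- Iterated directional derivatives along a list of directions. -/
def dirDerivList {n : ℕ} : List (Fin n → ℝ) → ((Fin n → ℝ) → ℝ) → ((Fin n → ℝ) → ℝ)
  | [], f => f
  | t :: ts, f => dirDerivList ts fun y => fderiv ℝ f y t

/-! The barycentric coordinates are affine functions with `∑ i, λ_i = 1` and
`y = ∑ i, λ_i(y) x_i`. Hence each coordinate function is a linear combination of the `λ_i`, and,
padding with factors `∑ i, λ_i = 1`, every polynomial of degree at most `r` is a combination of the
`λ^α` with `|α| = r`. There are exactly as many of these as monomials of degree at most `r` in `n`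
variables, so they form a basis of `P_r`.

The vectors `x_i - x_0` (`i ≠ 0`) form the basis of `ℝⁿ` dual to `dλ_1, …, dλ_n`, so the `dλ_σ`
with `0 ∉ ⟦σ⟧` form a basis of `Alt^k ℝⁿ`, in which `η` has the coordinates
`η(x_{σ 1} - x_0, …, x_{σ k} - x_0)`. The products of the two bases form a basis of `P_r Λ^k`,
contained in the span of all the `λ^α dλ_σ`. -/

open MvPolynomial
open scoped Pointwise

instance {R M N ι : Type*} [Semiring R] [AddCommMonoid M] [Module R M] [AddCommMonoid N]
    [Module R N] : IsZeroApply (M [⋀^ι]→ₗ[R] N) (ι → M) N where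
  zero_apply _ := rfl

instance {R M N ι : Type*} [Semiring R] [AddCommMonoid M] [Module R M] [AddCommMonoid N]
    [Module R N] : IsAddApply (M [⋀^ι]→ₗ[R] N) (ι → M) N where
  add_apply _ _ _ := rfl

instance {k V P W : Type*} [Ring k] [AddCommGroup V] [Module k V] [AddTorsor V P]
    [AddCommGroup W] [Module k W] : IsZeroApply (P →ᵃ[k] W) P W where
  zero_apply _ := rfl

instance {k V P W : Type*} [Ring k] [AddCommGroup V] [Module k V] [AddTorsor V P]
    [AddCommGroup W] [Module k W] : IsAddApply (P →ᵃ[k] W) P W where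
  add_apply _ _ _ := rfl

theorem Matrix.det_ite_eq_of_strictMono {R ι : Type*} [CommRing R] [LinearOrder ι] {k : ℕ}
    {a b : Fin k → ι} (ha : StrictMono a) (hb : StrictMono b) :
    (Matrix.of fun j i => if a i = b j then (1 : R) else 0).det = if a = b then 1 else 0 := by
  split_ifs with hab
  · subst hab
    convert Matrix.det_one (n := Fin k) (R := R)
    ext j i
    simp [Matrix.one_apply, ha.injective.eq_iff, eq_comm]
  · obtain ⟨i, hi⟩ : ∃ i, a i ∉ Set.range b := by
      by_contra! h
      refine hab ((ha.range_inj hb).mp (Set.eq_of_subset_of_ncard_le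
        (Set.range_subset_iff.mpr h) ?_ (Set.finite_range b)))
      rw [Set.ncard_range_of_injective ha.injective, Set.ncard_range_of_injective hb.injective]
    refine Matrix.det_eq_zero_of_column_eq_zero i fun j => ?_
    simp only [Matrix.of_apply, ite_eq_right_iff]
    exact fun h => (hi ⟨j, h.symm⟩).elim

theorem AlternatingMap.ext_of_strictMono {ι R M N : Type*} [LinearOrder ι] [CommSemiring R]
    [AddCommMonoid M] [Module R M] [AddCommGroup N] [Module R N] {k : ℕ}
    (b : Module.Basis ι R M) {f g : M [⋀^Fin k]→ₗ[R] N}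
    (h : ∀ v : Fin k → ι, StrictMono v → f (b ∘ v) = g (b ∘ v)) : f = g := by
  refine b.ext_alternating fun v hv => ?_
  set π := Tuple.sort v
  have hsorted : StrictMono (v ∘ π) :=
    (Tuple.monotone_sort v).strictMono_of_injective (hv.comp π.injective)
  have hv : (fun i => b (v i)) = (b ∘ v ∘ π) ∘ π.symm := by
    funext i
    simp
  rw [hv, f.map_perm, g.map_perm, h _ hsorted]

theorem LinearIndependent.const_fun {X ι K M : Type*} [Ring K] [AddCommGroup M] [Module K M]
    {e : ι → M} (he : LinearIndependent K e) :
    LinearIndependent (X → K) fun j (_ : X) => e j := by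
  rw [linearIndependent_iff'] at he ⊢
  intro s g hg j hj
  funext y
  exact he s (fun j => g j y) (by simpa using congrFun hg y) j hj

def MvPolynomial.evalFun (σ R : Type*) [CommSemiring R] :
    MvPolynomial σ R →ₗ[R] ((σ → R) → R) :=
  LinearMap.pi fun y => (aeval y).toLinearMap

theorem MvPolynomial.evalFun_apply {σ R : Type*} [CommSemiring R] (p : MvPolynomial σ R)
    (y : σ → R) : evalFun σ R p y = eval y p := by
  simp [evalFun]

theorem MvPolynomial.evalFun_injective (σ R : Type*) [CommRing R] [IsDomain R] [Infinite R] :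
    Function.Injective (evalFun σ R) := fun p q h =>
  MvPolynomial.funext fun y => by simpa [evalFun_apply] using congrFun h y

instance (n : ℕ) : SetLike.GradedMonoid (Pscalar n) where
  one_mem := ⟨1, by simp, fun y => by simp⟩
  mul_mem := by
    rintro i j f g ⟨p, hp, hpf⟩ ⟨q, hq, hqg⟩
    exact ⟨p * q, (totalDegree_mul p q).trans (add_le_add hp hq), fun y => by simp [hpf, hqg]⟩

theorem coord_mem_Pscalar {n : ℕ} (m : Fin n) : (fun y : Fin n → ℝ => y m) ∈ Pscalar n 1 :=
  ⟨X m, (totalDegree_X m).le, fun _ => eval_X _⟩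

theorem const_mem_Pscalar {n : ℕ} (a : ℝ) (r : ℕ) : (fun _ : Fin n → ℝ => a) ∈ Pscalar n r :=
  ⟨C a, by simp, fun _ => eval_C a⟩

theorem Pscalar_eq_map_evalFun (n r : ℕ) :
    Pscalar n r = (restrictTotalDegree (Fin n) ℝ r).map (evalFun (Fin n) ℝ) := by
  ext f
  simp only [Submodule.mem_map, mem_restrictTotalDegree, funext_iff, evalFun_apply]
  rfl

def sumEqEquivSumLe (n r : ℕ) :
    {α : Fin (n + 1) → ℕ // ∑ i, α i = r} ≃ {β : Fin n → ℕ // ∑ i, β i ≤ r} where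
  toFun α := ⟨Fin.tail α.1, by
    have := α.2
    rw [Fin.sum_univ_succ] at this
    simp only [Fin.tail]
    omega⟩
  invFun β := ⟨Fin.cons (r - ∑ i, β.1 i) β.1, by
    rw [Fin.sum_univ_succ]
    simp only [Fin.cons_zero, Fin.cons_succ]
    omega⟩
  left_inv α := by
    obtain ⟨α, hα⟩ := α
    ext i
    refine Fin.cases ?_ (fun i => rfl) i
    rw [Fin.sum_univ_succ] at hα
    simp only [Fin.cons_zero, Fin.tail]
    omega
  right_inv β := by simp

instance (k r : ℕ) : Fintype {α : Fin k → ℕ // ∑ i, α i = r} :=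
  Fintype.subtype (Finset.Nat.antidiagonalTuple k r) fun _ => Finset.Nat.mem_antidiagonalTuple

theorem finrank_Pscalar (n r : ℕ) :
    Module.finrank ℝ (Pscalar n r) = Nat.card {α : Fin (n + 1) → ℕ // ∑ i, α i = r} := by
  have b : Module.Basis _ ℝ (restrictTotalDegree (Fin n) ℝ r) := basisRestrictSupport ℝ _
  rw [Pscalar_eq_map_evalFun, ← LinearEquiv.finrank_eq
      (Submodule.equivMapOfInjective _ (evalFun_injective _ _) _),
    Module.finrank_eq_nat_card_basis b, Nat.card_congr (sumEqEquivSumLe n r)]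
  exact Nat.card_congr
    (Equiv.subtypeEquiv Finsupp.equivFunOnFinite fun s => by simp [Finsupp.sum_fintype])

abbrev BasisIndex (n r k : ℕ) :=
  {q : (Fin (n + 1) → ℕ) × (Fin k → Fin (n + 1)) //
    (∑ i, q.1 i) = r ∧ StrictMono q.2 ∧ ∀ j, q.2 j ≠ 0}

namespace Simplex

variable {n : ℕ} (B : Simplex n)

def lamAff (i : Fin (n + 1)) : (Fin n → ℝ) →ᵃ[ℝ] ℝ :=
  (B.dlam i).toAffineMap + AffineMap.const ℝ _ (B.c i)

@[simp]
theorem lamAff_apply (i : Fin (n + 1)) (y : Fin n → ℝ) : B.lamAff i y = B.lam i y := rfl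

theorem lam_apply_vertex (i j : Fin (n + 1)) : B.lam i (B.x j) = if i = j then 1 else 0 :=
  B.lam_vertex i j

theorem affineMap_ext {P : Type*} [AddCommGroup P] [Module ℝ P] {f g : (Fin n → ℝ) →ᵃ[ℝ] P}
    (h : ∀ j, f (B.x j) = g (B.x j)) : f = g := by
  refine AffineMap.ext_on ?_ (Set.forall_mem_range.mpr h)
  rw [B.affineIndep.affineSpan_eq_top_iff_card_eq_finrank_add_one]
  simp

theorem sum_lam (y : Fin n → ℝ) : ∑ i, B.lam i y = 1 := by
  have := B.affineMap_ext (f := ∑ i, B.lamAff i) (g := AffineMap.const ℝ _ 1) fun j => by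
    simp [sum_apply, lam_apply_vertex]
  simpa [sum_apply] using congrArg (· y) this

theorem coord_eq_sum_lam (y : Fin n → ℝ) (m : Fin n) : y m = ∑ i, B.x i m * B.lam i y := by
  have := B.affineMap_ext (f := (LinearMap.proj m : (Fin n → ℝ) →ₗ[ℝ] ℝ).toAffineMap)
    (g := ∑ i, B.x i m • B.lamAff i) fun j => by
      simp [sum_apply, lam_apply_vertex]
  simpa [sum_apply] using congrArg (· y) this

theorem lam_mem_Pscalar (i : Fin (n + 1)) : B.lam i ∈ Pscalar n 1 := by
  have : B.lam i = ∑ m, B.dlam i (fun j => if m = j then 1 else 0) • (fun y : Fin n → ℝ => y m)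
      + fun _ => B.c i := by
    funext y
    simp [lam, LinearMap.pi_apply_eq_sum_univ (B.dlam i) y, mul_comm]
  rw [this]
  exact add_mem (sum_mem fun m _ => Submodule.smul_mem _ _ (coord_mem_Pscalar m))
    (const_mem_Pscalar _ _)

theorem lamPow_eq_prod (α : Fin (n + 1) → ℕ) : B.lamPow α = ∏ i, B.lam i ^ α i := by
  funext y
  simp [lamPow, Finset.prod_apply]

theorem lamPow_zero : B.lamPow 0 = 1 := by
  funext y
  simp [lamPow]

theorem lamPow_single (i : Fin (n + 1)) : B.lamPow (Pi.single i 1) = B.lam i := by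
  funext y
  simp [lamPow, Pi.single_apply]

theorem lamPow_add (α β : Fin (n + 1) → ℕ) : B.lamPow (α + β) = B.lamPow α * B.lamPow β := by
  funext y
  simp [lamPow, pow_add, Finset.prod_mul_distrib]

theorem lamPow_mem_Pscalar (α : Fin (n + 1) → ℕ) : B.lamPow α ∈ Pscalar n (∑ i, α i) := by
  rw [lamPow_eq_prod]
  exact SetLike.prod_mem_graded _ _ _ fun i _ => by
    simpa using SetLike.pow_mem_graded (α i) (B.lam_mem_Pscalar i)

def lamPowSpan (m : ℕ) : Submodule ℝ ((Fin n → ℝ) → ℝ) :=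
  Submodule.span ℝ (Set.range fun α : {α : Fin (n + 1) → ℕ // ∑ i, α i = m} => B.lamPow α)

theorem lamPow_mem_lamPowSpan (α : Fin (n + 1) → ℕ) : B.lamPow α ∈ B.lamPowSpan (∑ i, α i) :=
  Submodule.subset_span ⟨⟨α, rfl⟩, rfl⟩

instance : SetLike.GradedMonoid B.lamPowSpan where
  one_mem := by simpa [lamPow_zero] using B.lamPow_mem_lamPowSpan 0
  mul_mem i j f g hf hg := by
    have : B.lamPowSpan i * B.lamPowSpan j ≤ B.lamPowSpan (i + j) := by
      rw [lamPowSpan, lamPowSpan, Submodule.span_mul_span, Submodule.span_le]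
      rintro _ ⟨_, ⟨α, rfl⟩, _, ⟨β, rfl⟩, rfl⟩
      simpa [← B.lamPow_add, Finset.sum_add_distrib, α.2, β.2] using
        B.lamPow_mem_lamPowSpan (α.1 + β.1)
    exact this (Submodule.mul_mem_mul hf hg)

theorem lam_mem_lamPowSpan (i : Fin (n + 1)) : B.lam i ∈ B.lamPowSpan 1 := by
  simpa [lamPow_single] using B.lamPow_mem_lamPowSpan (Pi.single i 1)

theorem coord_mem_lamPowSpan (m : Fin n) : (fun y : Fin n → ℝ => y m) ∈ B.lamPowSpan 1 := by
  have : (fun y : Fin n → ℝ => y m) = ∑ i, B.x i m • B.lam i := by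
    funext y
    simp [B.coord_eq_sum_lam y m]
  rw [this]
  exact sum_mem fun i _ => Submodule.smul_mem _ _ (B.lam_mem_lamPowSpan i)

theorem lamPowSpan_mono : Monotone B.lamPowSpan := by
  refine monotone_nat_of_le_succ fun m f hf => ?_
  have hsum : ∑ i, B.lam i = 1 := by
    funext y
    simp [B.sum_lam]
  have h := SetLike.mul_mem_graded hf
    (sum_mem fun i (_ : i ∈ Finset.univ) => B.lam_mem_lamPowSpan i)
  rwa [hsum, mul_one] at h

theorem Pscalar_le_lamPowSpan (r : ℕ) : Pscalar n r ≤ B.lamPowSpan r := by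
  rintro f ⟨p, hp, hpf⟩
  have hf : f = ∑ s ∈ p.support, coeff s p • ∏ m, (fun y : Fin n → ℝ => y m) ^ s m := by
    funext y
    simp [← hpf, eval_eq', Finset.prod_apply]
  rw [hf]
  refine sum_mem fun s hs => Submodule.smul_mem _ _ (B.lamPowSpan_mono (a := ∑ m, s m) ?_ ?_)
  · have := le_totalDegree hs
    rw [Finsupp.sum_fintype _ _ fun _ => rfl] at this
    omega
  · exact SetLike.prod_mem_graded _ _ _ fun m _ => by
      simpa using SetLike.pow_mem_graded (s m) (B.coord_mem_lamPowSpan m)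

theorem lamPowSpan_eq_Pscalar (r : ℕ) : B.lamPowSpan r = Pscalar n r := by
  refine le_antisymm (Submodule.span_le.mpr ?_) (B.Pscalar_le_lamPowSpan r)
  rintro _ ⟨α, rfl⟩
  simpa [α.2] using B.lamPow_mem_Pscalar α.1

theorem lamPow_linearIndependent (r : ℕ) :
    LinearIndependent ℝ fun α : {α : Fin (n + 1) → ℕ // ∑ i, α i = r} => B.lamPow α := by
  rw [linearIndependent_iff_card_eq_finrank_span, Set.finrank, ← lamPowSpan,
    lamPowSpan_eq_Pscalar, finrank_Pscalar, Nat.card_eq_fintype_card]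

def edgeBasis : Module.Basis {i : Fin (n + 1) // i ≠ 0} ℝ (Fin n → ℝ) :=
  basisOfLinearIndependentOfCardEqFinrank' (fun i => B.x i - B.x 0)
    ((affineIndependent_iff_linearIndependent_vsub ℝ B.x 0).mp B.affineIndep) (by simp)

theorem edgeBasis_apply (i : {i : Fin (n + 1) // i ≠ 0}) : B.edgeBasis i = B.x i - B.x 0 := by
  simp [edgeBasis]

theorem dlam_edgeBasis (i j : {i : Fin (n + 1) // i ≠ 0}) :
    B.dlam i (B.edgeBasis j) = if i = j then 1 else 0 := by
  have hi := B.lam_vertex i j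
  have h0 := B.lam_vertex i 0
  rw [if_neg i.2] at h0
  rw [edgeBasis_apply, map_sub]
  simp only [Subtype.ext_iff]
  split_ifs at hi ⊢ <;> linarith

theorem dlamWedge_edgeBasis {k : ℕ} {v w : Fin k → {i : Fin (n + 1) // i ≠ 0}}
    (hv : StrictMono v) (hw : StrictMono w) :
    B.dlamWedge (fun j => (v j : Fin (n + 1))) (B.edgeBasis ∘ w) = if v = w then 1 else 0 := by
  show Matrix.det (Matrix.of fun j i => B.dlam (v i) (B.edgeBasis (w j))) = _
  simp only [dlam_edgeBasis]
  exact Matrix.det_ite_eq_of_strictMono hv hw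

theorem eq_sum_dlamWedge {k : ℕ} (η : (Fin n → ℝ) [⋀^Fin k]→ₗ[ℝ] ℝ) :
    η = ∑ v : {v : Fin k → {i : Fin (n + 1) // i ≠ 0} // StrictMono v},
      η (B.edgeBasis ∘ v.1) • B.dlamWedge (fun j => (v.1 j : Fin (n + 1))) := by
  refine AlternatingMap.ext_of_strictMono B.edgeBasis fun w hw => ?_
  rw [sum_apply, Finset.sum_eq_single ⟨w, hw⟩]
  · simp [dlamWedge_edgeBasis _ hw hw]
  · intro v _ hv
    simp [dlamWedge_edgeBasis _ v.2 hw, Subtype.ext_iff.not.mp hv]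
  · simp

theorem dlamWedge_linearIndependent (k : ℕ) :
    LinearIndependent ℝ fun v : {v : Fin k → {i : Fin (n + 1) // i ≠ 0} // StrictMono v} =>
      B.dlamWedge fun j => (v.1 j : Fin (n + 1)) := by
  rw [linearIndependent_iff']
  intro s g hg w hw
  have h := congrArg (fun η : (Fin n → ℝ) [⋀^Fin k]→ₗ[ℝ] ℝ => η (B.edgeBasis ∘ w.1)) hg
  rw [sum_apply, Finset.sum_eq_single_of_mem w hw] at h
  · simpa [B.dlamWedge_edgeBasis w.2 w.2] using h
  · intro v _ hvw
    simp [B.dlamWedge_edgeBasis v.2 w.2, Subtype.ext_iff.not.mp hvw]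

theorem lamPow_smul_dlamWedge_mem_PLambda {k : ℕ} (α : Fin (n + 1) → ℕ)
    (σ : Fin k → Fin (n + 1)) :
    (fun y => B.lamPow α y • B.dlamWedge σ) ∈ PLambda n (∑ i, α i) k := fun v => by
  have he : (fun y => (B.lamPow α y • B.dlamWedge σ) v) = B.dlamWedge σ v • B.lamPow α := by
    funext y
    simp [mul_comm]
  show _ ∈ Pscalar n _
  rw [he]
  exact Submodule.smul_mem _ _ (B.lamPow_mem_Pscalar α)

theorem linearIndependent_lamPow_smul_dlamWedge (r k : ℕ) :
    LinearIndependent ℝ fun q : BasisIndex n r k =>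
      fun y => B.lamPow q.1.1 y • B.dlamWedge q.1.2 := by
  have hprod := linearIndependent_smul (B.lamPow_linearIndependent r)
    (B.dlamWedge_linearIndependent k).const_fun
  let e : BasisIndex n r k → {α : Fin (n + 1) → ℕ // ∑ i, α i = r} ×
      {v : Fin k → {i : Fin (n + 1) // i ≠ 0} // StrictMono v} :=
    fun q => (⟨q.1.1, q.2.1⟩, ⟨fun j => ⟨q.1.2 j, q.2.2.2 j⟩, q.2.2.1⟩)
  have he : Function.Injective e := fun q q' h => Subtype.ext <| Prod.ext
    (congrArg (fun p => p.1.1) h) (funext fun j => congrArg (fun p => (p.2.1 j).1) h)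
  convert hprod.comp e he using 1
  funext q y
  rfl

theorem span_lamPow_smul_dlamWedge (r k : ℕ) :
    Submodule.span ℝ (Set.range fun q : BasisIndex n r k =>
      fun y => B.lamPow q.1.1 y • B.dlamWedge q.1.2) = PLambda n r k := by
  refine le_antisymm ?_ fun ω hω => ?_
  · rw [Submodule.span_le]
    rintro _ ⟨q, rfl⟩
    simpa [q.2.1] using B.lamPow_smul_dlamWedge_mem_PLambda (k := k) q.1.1 q.1.2
  have hω_eq : ω = ∑ v : {v : Fin k → {i : Fin (n + 1) // i ≠ 0} // StrictMono v},
      (fun y => ω y (B.edgeBasis ∘ v.1)) • fun _ => B.dlamWedge fun j => (v.1 j : Fin (n + 1)) := by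
    funext y
    simpa [Finset.sum_apply] using B.eq_sum_dlamWedge (ω y)
  rw [hω_eq]
  refine sum_mem fun v _ => Submodule.span_mono ?_ (Submodule.smul_mem_span_smul_of_mem
    (s := Set.range fun α : {α : Fin (n + 1) → ℕ // ∑ i, α i = r} => B.lamPow α) ?_
    (Set.mem_singleton _))
  · rintro _ ⟨_, ⟨α, rfl⟩, _, rfl, rfl⟩
    exact ⟨⟨(α.1, fun j => v.1 j), α.2, v.2, fun j => (v.1 j).2⟩, rfl⟩
  · rw [← lamPowSpan, lamPowSpan_eq_Pscalar]
    exact hω _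

end Simplex

theorem stmt2_general {n : ℕ} (B : Simplex n) (r k : ℕ) :
    Submodule.span ℝ
        {ω | ∃ (α : Fin (n + 1) → ℕ) (σ : Fin k → Fin (n + 1)),
          (∑ i, α i) = r ∧ StrictMono σ ∧
          ω = fun y => B.lamPow α y • B.dlamWedge σ} = PLambda n r k
    ∧ LinearIndependent ℝ
        (fun q : {q : (Fin (n + 1) → ℕ) × (Fin k → Fin (n + 1)) //
            (∑ i, q.1 i) = r ∧ StrictMono q.2 ∧ ∀ j, q.2 j ≠ 0} =>
          fun y => B.lamPow q.1.1 y • B.dlamWedge q.1.2)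
    ∧ Submodule.span ℝ
        (Set.range (fun q : {q : (Fin (n + 1) → ℕ) × (Fin k → Fin (n + 1)) //
            (∑ i, q.1 i) = r ∧ StrictMono q.2 ∧ ∀ j, q.2 j ≠ 0} =>
          fun y => B.lamPow q.1.1 y • B.dlamWedge q.1.2)) = PLambda n r k := by
  refine ⟨le_antisymm ?_ ?_, B.linearIndependent_lamPow_smul_dlamWedge r k,
    B.span_lamPow_smul_dlamWedge r k⟩
  · rw [Submodule.span_le]
    rintro _ ⟨α, σ, rfl, -, rfl⟩
    exact B.lamPow_smul_dlamWedge_mem_PLambda α σ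
  · rw [← B.span_lamPow_smul_dlamWedge r k]
    refine Submodule.span_mono ?_
    rintro _ ⟨q, rfl⟩
    exact ⟨q.1.1, q.1.2, q.2.1, q.2.2.1, rfl⟩

/-- `{λ^α dλ_σ : |α| = r, σ increasing}` spans `P_r Λ^k`, and the subfamily with
`0 ∉ ⟦σ⟧` is a basis. -/
theorem stmt2 {n : ℕ} (hn : 1 ≤ n) (B : Simplex n) (r k : ℕ) (hr : 1 ≤ r) (hk : k ≤ n) :
    Submodule.span ℝ
        {ω | ∃ (α : Fin (n + 1) → ℕ) (σ : Fin k → Fin (n + 1)),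
          (∑ i, α i) = r ∧ StrictMono σ ∧
          ω = fun y => B.lamPow α y • B.dlamWedge σ} = PLambda n r k
    ∧ LinearIndependent ℝ
        (fun q : {q : (Fin (n + 1) → ℕ) × (Fin k → Fin (n + 1)) //
            (∑ i, q.1 i) = r ∧ StrictMono q.2 ∧ ∀ j, q.2 j ≠ 0} =>
          fun y => B.lamPow q.1.1 y • B.dlamWedge q.1.2)
    ∧ Submodule.span ℝ
        (Set.range (fun q : {q : (Fin (n + 1) → ℕ) × (Fin k → Fin (n + 1)) //
            (∑ i, q.1 i) = r ∧ StrictMono q.2 ∧ ∀ j, q.2 j ≠ 0} =>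
          fun y => B.lamPow q.1.1 y • B.dlamWedge q.1.2)) = PLambda n r k :=
  stmt2_general B r k
end
end

section
/- Let r ≥ 1, 0 ≤ k ≤ n, and let S ⊆ {0,…,n} be nonempty. Let real coefficients c_{α,σ} be given, indexed by the pairs (α, σ) with α ∈ ℕ^{n+1}, |α| = r−1, σ : {0,…,k} → {0,…,n} increasing, and ⟦α,σ⟧ ⊆ S. If the k-form Σ c_{α,σ} λ^α φ_σ has vanishing trace on the face f_S (i.e., Σ c_{α,σ} λ^α(x) φ_σ(x)(v_1,…,v_k) = 0 whenever λ_i(x) = 0 for all i ∉ S and v_1,…,v_k ∈ T_S), then Σ c_{α,σ} λ^α φ_σ = 0 identically on ℝⁿ. (This expresses that the barycentric extension operator, sending the trace on f_S of λ^α φ_σ to the global form λ^α φ_σ, is well defined on P⁻_rΛ^k(f_S).) -/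
open scoped BigOperators

noncomputable section

/-!
Each form `λ^α φ_σ` with `⟦α,σ⟧ ⊆ S` only sees `λ_i(y)` and `dλ_i(v_j)` for `i ∈ S`, and is
homogeneous of degree `|α| + 1 = r` in them. If `t = Σ_{i ∈ S} λ_i(y) ≠ 0`, the point
`z = Σ_{i ∈ S} (λ_i(y) / t) x_i` lies on the affine hull of `f_S`, and subtracting from each
`dλ_•(v_j)` the multiple `s_j λ_•(y)` with `s_j = Σ_{i ∈ S} dλ_i(v_j) / t` gives the coordinates of a
tangent vector `w_j ∈ T_S`. Scaling `λ^α` and writing `φ_σ(y)(v)` as a determinant (whose rows are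
changed only by adding multiples of the first one) yields `ω(y)(v) = t^r ω(z)(w) = 0`. Where
`t = 0`, approach `y` along the segment towards a vertex `x_p` of `f_S`, on which `t` is the
segment parameter, and conclude by continuity.
-/

instance inst_s9 {R M N ι : Type*} [Semiring R] [AddCommMonoid M] [Module R M] [AddCommMonoid N]
    [Module R N] : IsZeroApply (M [⋀^ι]→ₗ[R] N) (ι → M) N :=
  ⟨AlternatingMap.zero_apply⟩

instance inst_s9_2 {R M N ι : Type*} [Semiring R] [AddCommMonoid M] [Module R M] [AddCommMonoid N]
    [Module R N] : IsAddApply (M [⋀^ι]→ₗ[R] N) (ι → M) N :=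
  ⟨AlternatingMap.add_apply⟩

theorem eq_zero_of_forall_ne_zero_add_smul {E F : Type*} [TopologicalSpace E] [AddCommGroup E]
    [Module ℝ E] [ContinuousAdd E] [ContinuousSMul ℝ E] [TopologicalSpace F] [T2Space F]
    [Zero F] {f : E → F} (hf : Continuous f) (y d : E)
    (h : ∀ τ : ℝ, τ ≠ 0 → f (y + τ • d) = 0) : f y = 0 := by
  have hline : (fun τ : ℝ => f (y + τ • d)) = fun _ => 0 :=
    Continuous.ext_on (dense_compl_singleton 0)
      (hf.comp (continuous_const.add (continuous_id.smul continuous_const))) continuous_const h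
  simpa using congrFun hline 0

namespace Simplex

variable {n : ℕ} (B : Simplex n)

@[fun_prop]
theorem continuous_lam (i : Fin (n + 1)) : Continuous (B.lam i) :=
  (B.dlam i).continuous_of_finiteDimensional.add continuous_const

theorem lam_add_smul_sub (i : Fin (n + 1)) (y x : Fin n → ℝ) (τ : ℝ) :
    B.lam i (y + τ • (x - y)) = (1 - τ) * B.lam i y + τ * B.lam i x := by
  simp only [lam, map_add, map_smul, map_sub, smul_eq_mul]
  ring

theorem sum_lam_x {S : Finset (Fin (n + 1))} {p : Fin (n + 1)} (hp : p ∈ S) :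
    ∑ i ∈ S, B.lam i (B.x p) = 1 := by
  simp [lam, B.lam_vertex, hp]

theorem dlam_sum_smul_x (S : Finset (Fin (n + 1))) (b : Fin (n + 1) → ℝ) (m : Fin (n + 1)) :
    B.dlam m (∑ i ∈ S, b i • B.x i) = (if m ∈ S then b m else 0) - (∑ i ∈ S, b i) * B.c m := by
  have hx : ∀ i, B.dlam m (B.x i) = (if m = i then 1 else 0) - B.c m := fun i => by
    linarith [B.lam_vertex m i]
  simp only [map_sum, map_smul, smul_eq_mul, hx, mul_sub, mul_ite, mul_one, mul_zero,
    Finset.sum_sub_distrib, Finset.sum_ite_eq, Finset.sum_mul]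

theorem lam_sum_smul_x {S : Finset (Fin (n + 1))} {b : Fin (n + 1) → ℝ}
    (hb : ∑ i ∈ S, b i = 1) (m : Fin (n + 1)) :
    B.lam m (∑ i ∈ S, b i • B.x i) = if m ∈ S then b m else 0 := by
  rw [lam, dlam_sum_smul_x, hb]
  ring

theorem dlam_sum_smul_x_of_sum_eq_zero {S : Finset (Fin (n + 1))} {b : Fin (n + 1) → ℝ}
    (hb : ∑ i ∈ S, b i = 0) (m : Fin (n + 1)) :
    B.dlam m (∑ i ∈ S, b i • B.x i) = if m ∈ S then b m else 0 := by
  rw [dlam_sum_smul_x, hb, zero_mul, sub_zero]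

def whitneyMatrix {k : ℕ} (σ : Fin (k + 1) → Fin (n + 1)) (y : Fin n → ℝ)
    (v : Fin k → Fin n → ℝ) : Matrix (Fin (k + 1)) (Fin (k + 1)) ℝ :=
  Matrix.of (Fin.cons (fun a => B.lam (σ a) y) fun j a => B.dlam (σ a) (v j))

theorem whitney_apply_eq_det {k : ℕ} (σ : Fin (k + 1) → Fin (n + 1)) (y : Fin n → ℝ)
    (v : Fin k → Fin n → ℝ) : B.whitney σ y v = (B.whitneyMatrix σ y v).det := by
  rw [Matrix.det_succ_row_zero]
  simp only [whitney, sum_apply, AlternatingMap.smul_apply, smul_eq_mul]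
  rfl

theorem whitney_apply_scale {k : ℕ} (σ : Fin (k + 1) → Fin (n + 1)) {y z : Fin n → ℝ}
    {v w : Fin k → Fin n → ℝ} {t : ℝ} {s : Fin k → ℝ}
    (hlam : ∀ a, B.lam (σ a) y = t * B.lam (σ a) z)
    (hdlam : ∀ j a, B.dlam (σ a) (v j) = B.dlam (σ a) (w j) + t * s j * B.lam (σ a) z) :
    B.whitney σ y v = t * B.whitney σ z w := by
  set M := B.whitneyMatrix σ z w
  have hrows : (B.whitneyMatrix σ y v).det = (M.updateRow 0 (t • M 0)).det := by
    refine Matrix.det_eq_of_forall_row_eq_smul_add_const (Fin.cons 0 s) 0 rfl fun i a => ?_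
    cases i using Fin.cases with
    | zero => simp [M, whitneyMatrix, hlam]
    | succ j =>
      simp only [M, whitneyMatrix, hdlam, Matrix.of_apply, Fin.cons_succ, Fin.cons_zero,
        Matrix.updateRow_ne (Fin.succ_ne_zero j), Matrix.updateRow_self, Pi.smul_apply, smul_eq_mul]
      ring
  rw [whitney_apply_eq_det, whitney_apply_eq_det, hrows, Matrix.det_updateRow_smul,
    Matrix.updateRow_eq_self]

theorem lamPow_scale (α : Fin (n + 1) → ℕ) {y z : Fin n → ℝ} {t : ℝ}
    (h : ∀ i, α i ≠ 0 → B.lam i y = t * B.lam i z) :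
    B.lamPow α y = t ^ (∑ i, α i) * B.lamPow α z := by
  rw [lamPow, lamPow, ← Finset.prod_pow_eq_pow_sum, ← Finset.prod_mul_distrib]
  refine Finset.prod_congr rfl fun i _ => ?_
  by_cases hα : α i = 0
  · simp [hα]
  · rw [h i hα, mul_pow]

def lamPowWhitneyForms (S : Finset (Fin (n + 1))) (m k : ℕ) :
    Set ((Fin n → ℝ) → ((Fin n → ℝ) [⋀^Fin k]→ₗ[ℝ] ℝ)) :=
  {η | ∃ (α : Fin (n + 1) → ℕ) (σ : Fin (k + 1) → Fin (n + 1)),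
    (∑ i, α i) = m ∧ suppF α ∪ rangeF σ ⊆ S ∧ η = fun y => B.lamPow α y • B.whitney σ y}

variable {B}

theorem continuous_apply_of_mem_span {S : Finset (Fin (n + 1))} {m k : ℕ}
    {ω : (Fin n → ℝ) → ((Fin n → ℝ) [⋀^Fin k]→ₗ[ℝ] ℝ)}
    (hω : ω ∈ Submodule.span ℝ (B.lamPowWhitneyForms S m k)) (v : Fin k → Fin n → ℝ) :
    Continuous fun y => ω y v := by
  induction hω using Submodule.span_induction with
  | mem η hη =>
    obtain ⟨α, σ, -, -, rfl⟩ := hη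
    simp only [whitney, AlternatingMap.smul_apply, sum_apply, smul_eq_mul, lamPow]
    fun_prop
  | zero => exact continuous_const
  | add η₁ η₂ _ _ h₁ h₂ => exact h₁.add h₂
  | smul a η _ h => exact h.const_smul a

theorem apply_eq_pow_mul_of_mem_span {S : Finset (Fin (n + 1))} {m k : ℕ}
    {ω : (Fin n → ℝ) → ((Fin n → ℝ) [⋀^Fin k]→ₗ[ℝ] ℝ)}
    (hω : ω ∈ Submodule.span ℝ (B.lamPowWhitneyForms S m k)) {y z : Fin n → ℝ}
    {v w : Fin k → Fin n → ℝ} {t : ℝ} {s : Fin k → ℝ}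
    (hlam : ∀ i ∈ S, B.lam i y = t * B.lam i z)
    (hdlam : ∀ i ∈ S, ∀ j, B.dlam i (v j) = B.dlam i (w j) + t * s j * B.lam i z) :
    ω y v = t ^ (m + 1) * ω z w := by
  induction hω using Submodule.span_induction with
  | mem η hη =>
    obtain ⟨α, σ, rfl, hS, rfl⟩ := hη
    have hσ : ∀ a, σ a ∈ S := fun a => hS (Finset.mem_union_right _ (by simp [rangeF]))
    have hα : ∀ i, α i ≠ 0 → i ∈ S := fun i hi =>
      hS (Finset.mem_union_left _ (by simp [suppF, hi]))
    simp only [AlternatingMap.smul_apply, smul_eq_mul]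
    rw [B.lamPow_scale α fun i hi => hlam i (hα i hi),
      B.whitney_apply_scale σ (fun a => hlam _ (hσ a)) fun j a => hdlam _ (hσ a) j]
    ring
  | zero => simp
  | add η₁ η₂ _ _ h₁ h₂ => simp only [Pi.add_apply, AlternatingMap.add_apply, h₁, h₂]; ring
  | smul a η _ h => simp only [Pi.smul_apply, AlternatingMap.smul_apply, smul_eq_mul, h]; ring

theorem apply_eq_zero_of_vanishTrace {S : Finset (Fin (n + 1))} {m k : ℕ}
    {ω : (Fin n → ℝ) → ((Fin n → ℝ) [⋀^Fin k]→ₗ[ℝ] ℝ)}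
    (hω : ω ∈ Submodule.span ℝ (B.lamPowWhitneyForms S m k)) (h : VanishTrace B S ω)
    {y : Fin n → ℝ} (hy : ∑ i ∈ S, B.lam i y ≠ 0) (v : Fin k → Fin n → ℝ) : ω y v = 0 := by
  set t := ∑ i ∈ S, B.lam i y
  set s : Fin k → ℝ := fun j => (∑ i ∈ S, B.dlam i (v j)) / t
  set z := ∑ i ∈ S, (B.lam i y / t) • B.x i
  set w : Fin k → Fin n → ℝ := fun j => ∑ i ∈ S, (B.dlam i (v j) - s j * B.lam i y) • B.x i
  have hz : ∀ i, B.lam i z = if i ∈ S then B.lam i y / t else 0 :=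
    B.lam_sum_smul_x (by rw [← Finset.sum_div, div_self hy])
  have hw : ∀ j i, B.dlam i (w j) = if i ∈ S then B.dlam i (v j) - s j * B.lam i y else 0 :=
    fun j => B.dlam_sum_smul_x_of_sum_eq_zero <| by
      rw [Finset.sum_sub_distrib, ← Finset.mul_sum, div_mul_cancel₀ _ hy, sub_self]
  have hface : ∀ i ∉ S, B.lam i z = 0 := fun i hi => by simp [hz, hi]
  have htan : ∀ j, w j ∈ B.tangent S := fun j i hi => by simp [hw, hi]
  rw [apply_eq_pow_mul_of_mem_span hω (z := z) (w := w) (t := t) (s := s) ?_ ?_,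
    h z hface w htan, mul_zero]
  · intro i hi
    rw [hz, if_pos hi, mul_div_cancel₀ _ hy]
  · intro i hi j
    rw [hw, if_pos hi, hz, if_pos hi]
    field_simp
    ring

end Simplex

theorem stmt9_general {n : ℕ} (B : Simplex n) (r k : ℕ)
    (S : Finset (Fin (n + 1))) (hS : S.Nonempty)
    (ω : (Fin n → ℝ) → ((Fin n → ℝ) [⋀^Fin k]→ₗ[ℝ] ℝ))
    (hω : ω ∈ Submodule.span ℝ
      {η | ∃ (α : Fin (n + 1) → ℕ) (σ : Fin (k + 1) → Fin (n + 1)),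
        (∑ i, α i) = r - 1 ∧ StrictMono σ ∧ suppF α ∪ rangeF σ ⊆ S ∧
        η = fun y => B.lamPow α y • B.whitney σ y})
    (h : VanishTrace B S ω) : ω = 0 := by
  have hω' : ω ∈ Submodule.span ℝ (B.lamPowWhitneyForms S (r - 1) k) :=
    Submodule.span_mono (by rintro η ⟨α, σ, hα, -, hsub, hη⟩; exact ⟨α, σ, hα, hsub, hη⟩) hω
  obtain ⟨p, hp⟩ := hS
  ext y v
  by_cases hy : ∑ i ∈ S, B.lam i y = 0
  · refine eq_zero_of_forall_ne_zero_add_smul (Simplex.continuous_apply_of_mem_span hω' v) y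
      (B.x p - y) fun τ hτ => Simplex.apply_eq_zero_of_vanishTrace hω' h ?_ v
    simp only [B.lam_add_smul_sub, Finset.sum_add_distrib, ← Finset.mul_sum, hy, B.sum_lam_x hp]
    simpa using hτ
  · exact Simplex.apply_eq_zero_of_vanishTrace hω' h hy v

/-- any linear combination of the forms `λ^α φ_σ` with `⟦α,σ⟧ ⊆ S` whose trace on
the face `f_S` vanishes is identically zero (well-definedness of the barycentric extension
operator for `P⁻_r Λ^k`). -/
theorem stmt9 {n : ℕ} (hn : 1 ≤ n) (B : Simplex n) (r k : ℕ) (hr : 1 ≤ r) (hk : k ≤ n)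
    (S : Finset (Fin (n + 1))) (hS : S.Nonempty)
    (ω : (Fin n → ℝ) → ((Fin n → ℝ) [⋀^Fin k]→ₗ[ℝ] ℝ))
    (hω : ω ∈ Submodule.span ℝ
      {η | ∃ (α : Fin (n + 1) → ℕ) (σ : Fin (k + 1) → Fin (n + 1)),
        (∑ i, α i) = r - 1 ∧ StrictMono σ ∧ suppF α ∪ rangeF σ ⊆ S ∧
        η = fun y => B.lamPow α y • B.whitney σ y})
    (h : VanishTrace B S ω) : ω = 0 :=
  stmt9_general B r k S hS ω hω h
end
end

section
/- Let r ≥ 1, 0 ≤ k ≤ n, and let S ⊆ {0,…,n} be nonempty. (i) For each pair (α, σ) with α ∈ ℕ^{n+1}, |α| = r, σ : {1,…,k} → {0,…,n} increasing and ⟦α,σ⟧ ⊆ S, the form λ^α ψ^{α,S}_σ has the same trace on the face f_S as λ^α dλ_σ: for every x with λ_i(x) = 0 for all i ∉ S and all v_1,…,v_k ∈ T_S, λ^α(x)·ψ^{α,S}_σ(v_1,…,v_k) = λ^α(x)·dλ_σ(v_1,…,v_k). (ii) If real coefficients c_{α,σ}, indexed by such pairs, are such that Σ c_{α,σ} λ^α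 dλ_σ has vanishing trace on f_S, then Σ c_{α,σ} λ^α ψ^{α,S}_σ = 0 identically on ℝⁿ. (Hence the assignment of the trace of λ^α dλ_σ on f_S to the global form λ^α ψ^{α,S}_σ well-defines an extension operator on P_rΛ^k(f_S).) -/
open scoped BigOperators

noncomputable section

open scoped Classical in
/-- The finite set of admissible pairs `(α, σ)` with `|α| = r`, `σ` increasing and
`⟦α,σ⟧ ⊆ S`. -/
noncomputable def pairsPD (n r k : ℕ) (S : Finset (Fin (n + 1))) :
    Finset ((Fin (n + 1) → ℕ) × (Fin k → Fin (n + 1))) :=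
  (Finset.Nat.antidiagonalTuple (n + 1) r ×ˢ
      (Finset.univ : Finset (Fin k → Fin (n + 1)))).filter
    fun q => StrictMono q.2 ∧ suppF q.1 ∪ rangeF q.2 ⊆ S


/-!
On `T_S` the functional `∑_{j ∈ S} dλ_j` vanishes, since `∑_j dλ_j = 0` and `dλ_i = 0` there for
`i ∉ S`; hence `ψ^{α,S}_i = dλ_i` on `T_S`, which is (i).

For (ii), write the form in the coordinates `μ_i = λ_i(y)`, `a i j = dλ_i(v_j)`. Points and
tangent vectors of `f_S` realize every `μ` supported on `S` with `∑ μ = 1` and every `a` supported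
on `S` with vanishing column sums, and homogeneity of degree `r` in `μ` removes the constraint
`∑ μ = 1`. Given any `v`, put `τ_j = ∑_{l ∈ S} dλ_l(v_j)`: the rows `dλ_i(v) - t_i τ` (`i ∈ S`)
have vanishing column sums whenever `∑_{i ∈ S} t_i = 1`. Comparing coefficients of the monomials
`μ^α`, the resulting identity holds for each `α` separately, so `t` may depend on `α`, and the
choice `t = α / r` turns `dλ_i - t_i τ` into `ψ^{α,S}_i`.
-/

open Finset Matrix

theorem AlternatingMap.sum_apply {R M N ι κ : Type*} [Semiring R] [AddCommMonoid M] [Module R M]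
    [AddCommMonoid N] [Module R N] (s : Finset κ) (f : κ → M [⋀^ι]→ₗ[R] N) (v : ι → M) :
    (∑ i ∈ s, f i) v = ∑ i ∈ s, f i v := by
  induction s using Finset.cons_induction <;> simp_all

lemma wedge_apply {n k : ℕ} (f : Fin k → ((Fin n → ℝ) →ₗ[ℝ] ℝ)) (v : Fin k → Fin n → ℝ) :
    wedge f v = (of fun i j => f i (v j)).det := by
  rw [← det_transpose]
  rfl

namespace Simplex

variable {n : ℕ} (B : Simplex n)

lemma dlam_vertex (i j : Fin (n + 1)) : B.dlam i (B.x j) = (if i = j then 1 else 0) - B.c i := by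
  linarith [B.lam_vertex i j]

lemma dlam_sum_smul_vertex (w : Fin (n + 1) → ℝ) (i : Fin (n + 1)) :
    B.dlam i (∑ j, w j • B.x j) = w i - (∑ j, w j) * B.c i := by
  simp [dlam_vertex, mul_sub, sum_sub_distrib, sum_mul]

lemma lam_sum_smul_vertex {w : Fin (n + 1) → ℝ} (hw : ∑ j, w j = 1) (i : Fin (n + 1)) :
    B.lam i (∑ j, w j • B.x j) = w i := by
  rw [lam, dlam_sum_smul_vertex, hw]
  ring

lemma dlam_sum_smul_vertex_of_sum_eq_zero {w : Fin (n + 1) → ℝ} (hw : ∑ j, w j = 0)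
    (i : Fin (n + 1)) : B.dlam i (∑ j, w j • B.x j) = w i := by
  rw [dlam_sum_smul_vertex, hw]
  ring

lemma sum_dlam_apply (u : Fin n → ℝ) : ∑ i, B.dlam i u = 0 := by
  have hli : LinearIndependent ℝ fun j : {j : Fin (n + 1) // j ≠ 0} => B.x j - B.x 0 := by
    simpa [vsub_eq_sub] using
      (affineIndependent_iff_linearIndependent_vsub ℝ B.x 0).mp B.affineIndep
  have hspan := hli.span_eq_top_of_card_eq_finrank' (by simp [Fintype.card_subtype_compl])
  have hsum : ∑ i, B.dlam i = 0 := LinearMap.ext_on_range hspan fun j => by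
    simp [dlam_vertex, sum_sub_distrib]
  simpa using LinearMap.congr_fun hsum u

lemma sum_dlam_apply_of_mem_tangent {S : Finset (Fin (n + 1))} {u : Fin n → ℝ}
    (hu : u ∈ B.tangent S) : ∑ i ∈ S, B.dlam i u = 0 :=
  (sum_subset (subset_univ S) fun i _ hi => hu i hi).trans (B.sum_dlam_apply u)

lemma psiWedge_apply {k : ℕ} (α : Fin (n + 1) → ℕ) (r : ℕ) (S : Finset (Fin (n + 1)))
    (σ : Fin k → Fin (n + 1)) (v : Fin k → Fin n → ℝ) :
    B.psiWedge α r S σ v = (of fun i j =>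
      B.dlam (σ i) (v j) - (α (σ i) / r) * ∑ l ∈ S, B.dlam l (v j)).det := by
  simp [psiWedge, wedge_apply, psi]

lemma psiWedge_apply_of_mem_tangent {k : ℕ} (α : Fin (n + 1) → ℕ) (r : ℕ)
    (S : Finset (Fin (n + 1))) (σ : Fin k → Fin (n + 1)) {v : Fin k → Fin n → ℝ}
    (hv : ∀ j, v j ∈ B.tangent S) : B.psiWedge α r S σ v = B.dlamWedge σ v := by
  simp [psiWedge_apply, dlamWedge, wedge_apply, B.sum_dlam_apply_of_mem_tangent (hv _)]

end Simplex

theorem eq_zero_of_homogeneous_of_eq_zero_of_eq_one {E : Type*} [AddCommGroup E] [Module ℝ E]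
    [TopologicalSpace E] [IsTopologicalAddGroup E] [ContinuousSMul ℝ E] {F : E → ℝ} {r : ℕ}
    (hF : Continuous F) (hhom : ∀ (t : ℝ) (x : E), F (t • x) = t ^ r * F x)
    (ℓ : E →ₗ[ℝ] ℝ) {x₀ : E} (hx₀ : ℓ x₀ ≠ 0) (h : ∀ x, ℓ x = 1 → F x = 0) (x : E) :
    F x = 0 := by
  have hne : ∀ x, ℓ x ≠ 0 → F x = 0 := fun x hx => by
    have := h _ (by simp [hx] : ℓ ((ℓ x)⁻¹ • x) = 1)
    rwa [hhom, mul_eq_zero, or_iff_right (pow_ne_zero _ (inv_ne_zero hx))] at this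
  by_cases hx : ℓ x ≠ 0
  · exact hne x hx
  -- on the hyperplane `ℓ = 0`, approach `x` along `x + t • x₀`
  set g : ℝ → ℝ := fun t => F (x + t • x₀)
  have hg : Filter.Tendsto g (nhdsWithin 0 {0}ᶜ) (nhds (g 0)) :=
    ((hF.comp (continuous_const.add (continuous_id.smul continuous_const))).tendsto 0).mono_left
      nhdsWithin_le_nhds
  have hg0 : Filter.Tendsto g (nhdsWithin 0 {0}ᶜ) (nhds 0) :=
    tendsto_const_nhds.congr' <| eventually_nhdsWithin_of_forall fun t ht =>
      (hne _ (by simpa [not_not.mp hx] using ⟨ht, hx₀⟩)).symm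
  simpa [g] using tendsto_nhds_unique hg hg0

theorem sum_filter_eq_zero_of_sum_mul_prod_pow_eq_zero {ι κ : Type*} [Fintype κ]
    (Q : Finset ι) (e : ι → ℝ) (deg : ι → κ → ℕ)
    (h : ∀ μ : κ → ℝ, ∑ q ∈ Q, e q * ∏ i, μ i ^ deg q i = 0) (d : κ → ℕ) :
    ∑ q ∈ Q with deg q = d, e q = 0 := by
  classical
  set p : MvPolynomial κ ℝ :=
    ∑ q ∈ Q, MvPolynomial.monomial (Finsupp.equivFunOnFinite.symm (deg q)) (e q)
  have hp : p = 0 := MvPolynomial.funext fun μ => by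
    simpa [p, MvPolynomial.eval_monomial, Finsupp.prod_fintype] using h μ
  have := congrArg (MvPolynomial.coeff (Finsupp.equivFunOnFinite.symm d)) hp
  simpa [p, MvPolynomial.coeff_sum, MvPolynomial.coeff_monomial, sum_filter] using this

/-- The form `∑ c_q λ^{α_q} dλ_{σ_q}` in the coordinates `μ_i = λ_i(y)`, `a i j = dλ_i(v_j)`. -/
def formInCoords {ι : Type*} [Fintype ι] {k : ℕ} (Q : Finset ((ι → ℕ) × (Fin k → ι)))
    (c : (ι → ℕ) × (Fin k → ι) → ℝ) (μ : ι → ℝ) (a : ι → Fin k → ℝ) : ℝ :=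
  ∑ q ∈ Q, c q * ((∏ i, μ i ^ q.1 i) * (of fun i j => a (q.2 i) j).det)

section formInCoords

variable {ι : Type*} [Fintype ι] {k : ℕ} (Q : Finset ((ι → ℕ) × (Fin k → ι)))
  (c : (ι → ℕ) × (Fin k → ι) → ℝ)

lemma continuous_formInCoords (a : ι → Fin k → ℝ) :
    Continuous fun μ => formInCoords Q c μ a := by
  unfold formInCoords
  fun_prop

lemma formInCoords_smul {r : ℕ} (hQ : ∀ q ∈ Q, ∑ i, q.1 i = r) (t : ℝ) (μ : ι → ℝ)
    (a : ι → Fin k → ℝ) : formInCoords Q c (t • μ) a = t ^ r * formInCoords Q c μ a := by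
  rw [formInCoords, formInCoords, mul_sum]
  refine sum_congr rfl fun q hq => ?_
  simp only [Pi.smul_apply, smul_eq_mul, mul_pow, prod_mul_distrib, prod_pow_eq_pow_sum, hQ q hq]
  ring

lemma formInCoords_congr_left {S : Finset ι} (hQ : ∀ q ∈ Q, ∀ i, q.1 i ≠ 0 → i ∈ S)
    {μ μ' : ι → ℝ} (hμ : ∀ i ∈ S, μ i = μ' i) (a : ι → Fin k → ℝ) :
    formInCoords Q c μ a = formInCoords Q c μ' a := by
  refine sum_congr rfl fun q hq => ?_
  congr 2
  refine prod_congr rfl fun i _ => ?_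
  by_cases hi : q.1 i = 0
  · simp [hi]
  · rw [hμ i (hQ q hq i hi)]

end formInCoords

section pairsPD

variable {n r k : ℕ} {S : Finset (Fin (n + 1))} {q : (Fin (n + 1) → ℕ) × (Fin k → Fin (n + 1))}

lemma mem_pairsPD :
    q ∈ pairsPD n r k S ↔ ∑ i, q.1 i = r ∧ StrictMono q.2 ∧ suppF q.1 ∪ rangeF q.2 ⊆ S := by
  simp [pairsPD, Finset.Nat.mem_antidiagonalTuple]

lemma mem_of_mem_pairsPD_of_ne_zero (hq : q ∈ pairsPD n r k S) {i : Fin (n + 1)}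
    (hi : q.1 i ≠ 0) : i ∈ S :=
  (mem_pairsPD.1 hq).2.2 (mem_union_left _ (by simp [suppF, hi]))

lemma mem_of_mem_pairsPD_apply (hq : q ∈ pairsPD n r k S) (j : Fin k) : q.2 j ∈ S :=
  (mem_pairsPD.1 hq).2.2 (mem_union_right _ (by simp [rangeF]))

lemma sum_fst_eq_of_mem_pairsPD (hq : q ∈ pairsPD n r k S) : ∑ i ∈ S, q.1 i = r :=
  (sum_subset (subset_univ S) fun i _ hi => by
    by_contra h
    exact hi (mem_of_mem_pairsPD_of_ne_zero hq h)).trans (mem_pairsPD.1 hq).1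

end pairsPD

namespace Simplex

variable {n : ℕ} (B : Simplex n) {k : ℕ}

lemma sum_smul_lamPow_smul_dlamWedge_apply
    (Q : Finset ((Fin (n + 1) → ℕ) × (Fin k → Fin (n + 1))))
    (c : (Fin (n + 1) → ℕ) × (Fin k → Fin (n + 1)) → ℝ) (y : Fin n → ℝ)
    (v : Fin k → Fin n → ℝ) :
    (∑ q ∈ Q, c q • (B.lamPow q.1 y • B.dlamWedge q.2)) v
      = formInCoords Q c (fun i => B.lam i y) (fun i j => B.dlam i (v j)) := by
  simp [AlternatingMap.sum_apply, formInCoords, lamPow, dlamWedge, wedge_apply]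

variable {S : Finset (Fin (n + 1))} {Q : Finset ((Fin (n + 1) → ℕ) × (Fin k → Fin (n + 1)))}
  {c : (Fin (n + 1) → ℕ) × (Fin k → Fin (n + 1)) → ℝ}

/-- On the face, the point `∑ μ_i x_i` has barycentric coordinates `μ` and the tangent vectors
`∑_i a i j • x_i` have `dλ_i`-coordinates `a i j`. -/
lemma formInCoords_eq_zero_of_vanishTrace_of_sum_eq_one
    (h : VanishTrace B S fun y => ∑ q ∈ Q, c q • (B.lamPow q.1 y • B.dlamWedge q.2))
    {μ : Fin (n + 1) → ℝ} (hμS : ∀ i ∉ S, μ i = 0) (hμ : ∑ i, μ i = 1)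
    {a : Fin (n + 1) → Fin k → ℝ} (haS : ∀ i ∉ S, a i = 0) (ha : ∀ j, ∑ i, a i j = 0) :
    formInCoords Q c μ a = 0 := by
  have hlam := B.lam_sum_smul_vertex hμ
  have hdlam j := B.dlam_sum_smul_vertex_of_sum_eq_zero (ha j)
  have := h (∑ i, μ i • B.x i) (fun i hi => (hlam i).trans (hμS i hi))
    (fun j => ∑ i, a i j • B.x i) (fun j i hi => (hdlam j i).trans (congrFun (haS i hi) j))
  simpa only [sum_smul_lamPow_smul_dlamWedge_apply, hlam, hdlam] using this

lemma formInCoords_eq_zero_of_vanishTrace {r : ℕ} (hS : S.Nonempty)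
    (h : VanishTrace B S fun y =>
      ∑ q ∈ pairsPD n r k S, c q • (B.lamPow q.1 y • B.dlamWedge q.2))
    {a : Fin (n + 1) → Fin k → ℝ} (haS : ∀ i ∉ S, a i = 0) (ha : ∀ j, ∑ i, a i j = 0)
    (μ : Fin (n + 1) → ℝ) : formInCoords (pairsPD n r k S) c μ a = 0 := by
  obtain ⟨j₀, hj₀⟩ := hS
  let ℓ : (Fin (n + 1) → ℝ) →ₗ[ℝ] ℝ := ∑ i ∈ S, LinearMap.proj i
  refine eq_zero_of_homogeneous_of_eq_zero_of_eq_one (continuous_formInCoords _ c a)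
    (fun t μ => formInCoords_smul _ c (fun q hq => (mem_pairsPD.1 hq).1) t μ a) ℓ
    (x₀ := Pi.single j₀ 1) (by simp [ℓ, hj₀]) (fun μ hμ => ?_) μ
  let μS : Fin (n + 1) → ℝ := fun i => if i ∈ S then μ i else 0
  rw [formInCoords_congr_left _ c (fun q hq i => mem_of_mem_pairsPD_of_ne_zero hq)
    (μ' := μS) (fun i hi => by simp [μS, hi])]
  refine B.formInCoords_eq_zero_of_vanishTrace_of_sum_eq_one h (fun i hi => by simp [μS, hi])
    ?_ haS ha
  simpa [μS, ℓ] using hμ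

theorem sum_smul_lamPow_smul_psiWedge_eq_zero {r : ℕ} (hr : r ≠ 0) (hS : S.Nonempty)
    (h : VanishTrace B S fun y =>
      ∑ q ∈ pairsPD n r k S, c q • (B.lamPow q.1 y • B.dlamWedge q.2)) :
    (fun y => ∑ q ∈ pairsPD n r k S, c q • (B.lamPow q.1 y • B.psiWedge q.1 r S q.2)) = 0 := by
  funext y
  ext v
  set τ : Fin k → ℝ := fun j => ∑ l ∈ S, B.dlam l (v j)
  let a (t : Fin (n + 1) → ℝ) : Fin (n + 1) → Fin k → ℝ :=
    fun i j => if i ∈ S then B.dlam i (v j) - t i * τ j else 0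
  have hfiber (d : Fin (n + 1) → ℕ) (t : Fin (n + 1) → ℝ) (ht : ∑ i ∈ S, t i = 1) :
      ∑ q ∈ pairsPD n r k S with q.1 = d, c q * (of fun i j => a t (q.2 i) j).det = 0 := by
    refine sum_filter_eq_zero_of_sum_mul_prod_pow_eq_zero _ _ Prod.fst (fun μ => ?_) d
    have := B.formInCoords_eq_zero_of_vanishTrace hS h (a := a t)
      (fun i hi => by funext j; simp [a, hi])
      (fun j => by simp [a, sum_ite_mem, sum_sub_distrib, ← sum_mul, ht, τ]) μ
    rw [← this, formInCoords]
    exact sum_congr rfl fun q _ => by ring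
  simp only [AlternatingMap.sum_apply, AlternatingMap.smul_apply, smul_eq_mul, Pi.zero_apply,
    AlternatingMap.zero_apply]
  rw [← sum_fiberwise_of_maps_to fun q hq => mem_image_of_mem Prod.fst hq]
  refine sum_eq_zero fun d hd => ?_
  obtain ⟨q₀, hq₀, rfl⟩ := mem_image.1 hd
  have hsum : ∑ i ∈ S, (q₀.1 i : ℝ) / r = 1 := by
    rw [← sum_div, ← Nat.cast_sum, sum_fst_eq_of_mem_pairsPD hq₀, div_self (Nat.cast_ne_zero.2 hr)]
  rw [← mul_zero (B.lamPow q₀.1 y), ← hfiber q₀.1 _ hsum, mul_sum]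
  refine sum_congr rfl fun q hq => ?_
  obtain ⟨hqP, hq⟩ := mem_filter.1 hq
  simp only [psiWedge_apply, hq, a, mem_of_mem_pairsPD_apply hqP, if_true]
  ring

end Simplex

theorem stmt12_general {n : ℕ} (B : Simplex n) (r k : ℕ) (hr : 1 ≤ r)
    (S : Finset (Fin (n + 1))) (hS : S.Nonempty) :
    (∀ (α : Fin (n + 1) → ℕ) (σ : Fin k → Fin (n + 1)),
      (∑ i, α i) = r → StrictMono σ → suppF α ∪ rangeF σ ⊆ S →
      ∀ y : Fin n → ℝ, (∀ i ∉ S, B.lam i y = 0) →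
        ∀ v : Fin k → (Fin n → ℝ), (∀ j, v j ∈ B.tangent S) →
          B.lamPow α y * B.psiWedge α r S σ v = B.lamPow α y * B.dlamWedge σ v)
    ∧ (∀ c : ((Fin (n + 1) → ℕ) × (Fin k → Fin (n + 1))) → ℝ,
        VanishTrace B S
          (fun y => ∑ q ∈ pairsPD n r k S, c q • (B.lamPow q.1 y • B.dlamWedge q.2)) →
        (fun y => ∑ q ∈ pairsPD n r k S, c q • (B.lamPow q.1 y • B.psiWedge q.1 r S q.2))
          = 0) :=
  ⟨fun α σ _ _ _ y _ v hv => by rw [B.psiWedge_apply_of_mem_tangent α r S σ hv],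
    fun _ h => B.sum_smul_lamPow_smul_psiWedge_eq_zero (Nat.one_le_iff_ne_zero.mp hr) hS h⟩

/-- (i) `λ^α ψ^{α,S}_σ` has the same trace on `f_S` as `λ^α dλ_σ`;
(ii) if a linear combination `Σ c_{α,σ} λ^α dλ_σ` has vanishing trace on `f_S`, then the
corresponding combination `Σ c_{α,σ} λ^α ψ^{α,S}_σ` vanishes identically (so the extension
operator for `P_r Λ^k` is well defined). -/
theorem stmt12 {n : ℕ} (hn : 1 ≤ n) (B : Simplex n) (r k : ℕ) (hr : 1 ≤ r) (hk : k ≤ n)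
    (S : Finset (Fin (n + 1))) (hS : S.Nonempty) :
    (∀ (α : Fin (n + 1) → ℕ) (σ : Fin k → Fin (n + 1)),
      (∑ i, α i) = r → StrictMono σ → suppF α ∪ rangeF σ ⊆ S →
      ∀ y : Fin n → ℝ, (∀ i ∉ S, B.lam i y = 0) →
        ∀ v : Fin k → (Fin n → ℝ), (∀ j, v j ∈ B.tangent S) →
          B.lamPow α y * B.psiWedge α r S σ v = B.lamPow α y * B.dlamWedge σ v)
    ∧ (∀ c : ((Fin (n + 1) → ℕ) × (Fin k → Fin (n + 1))) → ℝ,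
        VanishTrace B S
          (fun y => ∑ q ∈ pairsPD n r k S, c q • (B.lamPow q.1 y • B.dlamWedge q.2)) →
        (fun y => ∑ q ∈ pairsPD n r k S, c q • (B.lamPow q.1 y • B.psiWedge q.1 r S q.2))
          = 0) :=
  stmt12_general B r k hr S hS
end
end

section
/- Let 1 ≤ k ≤ n and let σ : {0,…,k} → {0,…,n} be increasing. For 0 ≤ j ≤ k let σĵ : {0,…,k−1} → {0,…,n} be the increasing map obtained from σ by omitting the value σ(j). Then Σ_{j=0}^{k} (−1)^j λ_{σ(j)}(x) · φ_{σĵ}(x) = 0 in Alt^{k−1} ℝⁿ for every x ∈ ℝⁿ. -/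
open scoped BigOperators

noncomputable section

/-! Expanding each `φ_{σĵ}` turns the sum into a double sum over pairs `(j, i)`, the term of
`(j, i)` carrying the form `dλ` of `σ ∘ j.succAbove ∘ i.succAbove`. The pair
`(j.succAbove i, i.predAbove j)` removes the same two vertices in the other order, so it carries
the same form and the same product of two `λ`s with the opposite sign, as in `∂ ∘ ∂ = 0`. -/

theorem Fin.sum_smul_sum_smul_succAbove_comp_eq_zero {R M : Type*} [CommRing R] [AddCommGroup M]
    [Module R M] {m : ℕ} (a : Fin (m + 2) → R) (W : (Fin m → Fin (m + 2)) → M) :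
    ∑ j : Fin (m + 2), ((-1) ^ (j : ℕ) * a j) •
      ∑ i : Fin (m + 1), ((-1) ^ (i : ℕ) * a (j.succAbove i)) • W (j.succAbove ∘ i.succAbove) =
      0 := by
  simp only [Finset.smul_sum, smul_smul]
  rw [← Fintype.sum_prod_type']
  refine Finset.sum_ninvolution (fun p : Fin (m + 2) × Fin (m + 1) =>
    (p.1.succAbove p.2, p.2.predAbove p.1)) ?_ ?_ (fun _ => Finset.mem_univ _) fun p => ?_
  · rintro ⟨j, i⟩
    have hcomp : (j.succAbove i).succAbove ∘ (i.predAbove j).succAbove =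
        j.succAbove ∘ i.succAbove :=
      funext (Fin.succAbove_succAbove_succAbove_predAbove j i)
    have hsign : (-1 : R) ^ (j.succAbove i : ℕ) * (-1) ^ (i.predAbove j : ℕ) =
        -((-1) ^ (j : ℕ) * (-1) ^ (i : ℕ)) := by
      rw [← pow_add, ← pow_add, Fin.neg_one_pow_succAbove_add_predAbove]
    rw [Fin.succAbove_succAbove_predAbove, hcomp, ← add_smul]
    convert zero_smul R _
    linear_combination a j * a (j.succAbove i) * hsign
  · exact fun p _ h => Fin.succAbove_ne p.1 p.2 (congrArg Prod.fst h)
  · exact Prod.ext (Fin.succAbove_succAbove_predAbove p.1 p.2)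
      (Fin.predAbove_predAbove_succAbove p.1 p.2)

theorem stmt16_general {n m : ℕ} (B : Simplex n)
    (σ : Fin (m + 2) → Fin (n + 1)) :
    ∀ y : Fin n → ℝ,
      (∑ j : Fin (m + 2), ((-1 : ℝ) ^ (j : ℕ) * B.lam (σ j) y) •
        B.whitney (σ ∘ j.succAbove) y) = 0 := fun y =>
  Fin.sum_smul_sum_smul_succAbove_comp_eq_zero (fun j => B.lam (σ j) y)
    fun τ => wedge fun l => B.dlam (σ (τ l))

/-- the Whitney form identity `Σ_j (-1)^j λ_{σ(j)} φ_{σĵ} = 0`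
(here `k = m + 1`, `σ : {0,…,k} → {0,…,n}` increasing, and `σĵ` omits the value `σ(j)`). -/
theorem stmt16 {n m : ℕ} (hn : 1 ≤ n) (B : Simplex n) (hk : m + 1 ≤ n)
    (σ : Fin (m + 2) → Fin (n + 1)) (hσ : StrictMono σ) :
    ∀ y : Fin n → ℝ,
      (∑ j : Fin (m + 2), ((-1 : ℝ) ^ (j : ℕ) * B.lam (σ j) y) •
        B.whitney (σ ∘ j.succAbove) y) = 0 :=
  stmt16_general B σ
end
end
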